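/- Two directed paths a and a′ in the square annulus X are joined by a directed homotopy in X if and only if they pass on the same side of the obstruction (both below, or both above). Consequently there are exactly two classes of directed paths in X up to directed homotopy. (The computation in 2.1 that the fundamental category of the square annulus has exactly two arrows 0 → 1.) -/

import Mathlib

open Set

/-- The obstruction: the open square `(1/3, 2/3) × (1/3, 2/3)`. -/
def Qobs : Set (ℝ × ℝ) := Ioo (1/3 : ℝ) (2/3) ×ˢ Ioo (1/3 : ℝ) (2/3)

/-- A directed path in `[0,1]²` avoiding `Q`, with nondecreasing coordinates,
from `(0,0)` to `(1,1)`. -/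
def DiPath (Q : Set (ℝ × ℝ)) (a : ℝ → ℝ × ℝ) : Prop :=
  ContinuousOn a (Icc 0 1) ∧
  (∀ t ∈ Icc (0:ℝ) 1, a t ∈ Icc (0:ℝ) 1 ×ˢ Icc (0:ℝ) 1) ∧
  (∀ t ∈ Icc (0:ℝ) 1, a t ∉ Q) ∧
  MonotoneOn (fun t => (a t).1) (Icc 0 1) ∧
  MonotoneOn (fun t => (a t).2) (Icc 0 1) ∧
  a 0 = (0, 0) ∧ a 1 = (1, 1)

/-- `a` passes below the obstruction. -/
def Below (a : ℝ → ℝ × ℝ) : Prop :=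
  ∀ t ∈ Icc (0:ℝ) 1, (a t).1 ∈ Ioo (1/3 : ℝ) (2/3) → (a t).2 ≤ 1/3

/-- `a` passes above the obstruction. -/
def Above (a : ℝ → ℝ × ℝ) : Prop :=
  ∀ t ∈ Icc (0:ℝ) 1, (a t).1 ∈ Ioo (1/3 : ℝ) (2/3) → (a t).2 ≥ 2/3

/-- A directed homotopy from `a` to `a'` avoiding `Q`: a continuous map
`H : [0,1] × [0,1] → [0,1]²` with `H (-,0) = a`, `H (-,1) = a'`, fixed endpoints
`(0,0)` and `(1,1)`, avoiding `Q`, all of whose intermediate paths have nondecreasing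
coordinates. -/
def DiHomotopy (Q : Set (ℝ × ℝ)) (a a' : ℝ → ℝ × ℝ) (H : ℝ → ℝ → ℝ × ℝ) : Prop :=
  ContinuousOn (fun p : ℝ × ℝ => H p.1 p.2) (Icc 0 1 ×ˢ Icc 0 1) ∧
  (∀ t ∈ Icc (0:ℝ) 1, ∀ s ∈ Icc (0:ℝ) 1, H t s ∈ Icc (0:ℝ) 1 ×ˢ Icc (0:ℝ) 1) ∧
  (∀ t ∈ Icc (0:ℝ) 1, H t 0 = a t) ∧
  (∀ t ∈ Icc (0:ℝ) 1, H t 1 = a' t) ∧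
  (∀ s ∈ Icc (0:ℝ) 1, H 0 s = (0, 0)) ∧
  (∀ s ∈ Icc (0:ℝ) 1, H 1 s = (1, 1)) ∧
  (∀ t ∈ Icc (0:ℝ) 1, ∀ s ∈ Icc (0:ℝ) 1, H t s ∉ Q) ∧
  (∀ s ∈ Icc (0:ℝ) 1, MonotoneOn (fun t => (H t s).1) (Icc 0 1) ∧
    MonotoneOn (fun t => (H t s).2) (Icc 0 1))


open Filter Topology

/-!
A directed path crosses the line `x = 1/2`, and since it avoids `Q` it does so at height
`≤ 1/3` or `≥ 2/3`; monotonicity then forces it to pass below, respectively above, the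
obstruction, and never both. Along a directed homotopy `H`, fix a crossing time `t₀` of
`H (-, s₀)`: for `s` near `s₀` the point `H t₀ s` still lies in the strip `1/3 < x < 2/3` on the
same side of `y = 1/2`, so the side of `H (-, s)` is locally constant in `s`, hence constant on
the connected interval `[0, 1]`.

Conversely, a path passing below stays in the region `y ≤ 1/3 ∨ x ≥ 2/3`, which is closed under
moving right and down. Two such paths `a`, `a'` are joined by `seMix a a'`, which at every `(t, s)`
dominates `a t` or `a' t` in that direction: for `s ≤ 1/2` it is the southeast join of `a t` with
`a' t` faded towards the corner `(0, 1)`, and symmetrically for `s ≥ 1/2`. Paths passing above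
are reduced to this case by exchanging the coordinates.
-/

lemma preimage_swap_Qobs : Prod.swap ⁻¹' Qobs = Qobs :=
  preimage_swap_prod _ _

lemma below_congr {a b : ℝ → ℝ × ℝ} (h : EqOn a b (Icc 0 1)) : Below a ↔ Below b := by
  refine forall₂_congr fun t ht => ?_
  rw [h ht]

namespace DiPath

variable {Q : Set (ℝ × ℝ)} {a : ℝ → ℝ × ℝ}

lemma continuousOn (ha : DiPath Q a) : ContinuousOn a (Icc 0 1) := ha.1

lemma notMem (ha : DiPath Q a) {t : ℝ} (ht : t ∈ Icc (0:ℝ) 1) : a t ∉ Q := ha.2.2.1 t ht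

lemma monotoneOn_fst (ha : DiPath Q a) : MonotoneOn (fun t => (a t).1) (Icc 0 1) := ha.2.2.2.1

lemma monotoneOn_snd (ha : DiPath Q a) : MonotoneOn (fun t => (a t).2) (Icc 0 1) := ha.2.2.2.2.1

lemma apply_zero (ha : DiPath Q a) : a 0 = (0, 0) := ha.2.2.2.2.2.1

lemma apply_one (ha : DiPath Q a) : a 1 = (1, 1) := ha.2.2.2.2.2.2

lemma swap (ha : DiPath Q a) : DiPath (Prod.swap ⁻¹' Q) (Prod.swap ∘ a) := by
  obtain ⟨hc, hI, hQ, hm₁, hm₂, h₀, h₁⟩ := ha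
  exact ⟨continuous_swap.comp_continuousOn hc, fun t ht => (hI t ht).symm, hQ, hm₂, hm₁,
    by simp [h₀], by simp [h₁]⟩

lemma snd_notMem_Ioo (ha : DiPath Qobs a) {t : ℝ} (ht : t ∈ Icc (0:ℝ) 1)
    (hx : (a t).1 ∈ Ioo (1/3 : ℝ) (2/3)) : (a t).2 ∉ Ioo (1/3 : ℝ) (2/3) :=
  fun hy => ha.notMem ht ⟨hx, hy⟩

lemma below_or_above (ha : DiPath Qobs a) : Below a ∨ Above a := by
  by_contra! h
  simp only [Below, Above, not_forall, not_le, exists_prop] at h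
  obtain ⟨⟨t, ht, hxt, hyt⟩, ⟨t', ht', hxt', hyt'⟩⟩ := h
  have hyt₂ : 2/3 ≤ (a t).2 := by
    by_contra! hlt; exact ha.snd_notMem_Ioo ht hxt ⟨hyt, hlt⟩
  have hyt'₂ : (a t').2 ≤ 1/3 := by
    by_contra! hlt; exact ha.snd_notMem_Ioo ht' hxt' ⟨hlt, hyt'⟩
  have htt' : t' ≤ t := by
    by_contra! hlt; linarith [ha.monotoneOn_snd ht ht' hlt.le]
  obtain ⟨u, hu, hyu⟩ : ∃ u ∈ Icc t' t, (a u).2 = 1/2 :=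
    intermediate_value_Icc htt' (ha.continuousOn.snd.mono (Icc_subset_Icc ht'.1 ht.2))
      ⟨by linarith, by linarith⟩
  have hu₀₁ : u ∈ Icc (0:ℝ) 1 := Icc_subset_Icc ht'.1 ht.2 hu
  refine ha.snd_notMem_Ioo hu₀₁ ⟨?_, ?_⟩ (by rw [hyu]; norm_num)
  · exact hxt'.1.trans_le (ha.monotoneOn_fst ht' hu₀₁ hu.1)
  · exact (ha.monotoneOn_fst hu₀₁ ht hu.2).trans_lt hxt.2

lemma exists_fst_eq_half (ha : DiPath Q a) : ∃ t ∈ Icc (0:ℝ) 1, (a t).1 = 1/2 :=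
  intermediate_value_Icc zero_le_one ha.continuousOn.fst
    (by rw [ha.apply_zero, ha.apply_one]; norm_num)

lemma above_iff_not_below (ha : DiPath Qobs a) : Above a ↔ ¬ Below a := by
  refine ⟨fun hA hB => ?_, ha.below_or_above.resolve_left⟩
  obtain ⟨t, ht, hx⟩ := ha.exists_fst_eq_half
  have hx' : (a t).1 ∈ Ioo (1/3 : ℝ) (2/3) := by rw [hx]; norm_num
  linarith [hA t ht hx', hB t ht hx']

lemma below_iff_snd_lt_half (ha : DiPath Qobs a) {t : ℝ} (ht : t ∈ Icc (0:ℝ) 1)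
    (hx : (a t).1 ∈ Ioo (1/3 : ℝ) (2/3)) : Below a ↔ (a t).2 < 1/2 := by
  refine ⟨fun hB => (hB t ht hx).trans_lt (by norm_num), fun hy => ?_⟩
  by_contra hB
  linarith [(ha.above_iff_not_below.2 hB) t ht hx]

end DiPath

def belowRegion : Set (ℝ × ℝ) := {p | p.2 ≤ 1/3 ∨ 2/3 ≤ p.1}

lemma disjoint_belowRegion_Qobs : Disjoint belowRegion Qobs := by
  rw [Set.disjoint_left]
  rintro p (h | h) ⟨hx, hy⟩
  · linarith [hy.1]
  · linarith [hx.2]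

lemma mem_belowRegion_of_le {p q : ℝ × ℝ} (hp : p ∈ belowRegion) (h₁ : p.1 ≤ q.1)
    (h₂ : q.2 ≤ p.2) : q ∈ belowRegion :=
  hp.imp h₂.trans h₁.trans'

section Regions

variable {a : ℝ → ℝ × ℝ}

lemma below_of_mapsTo (h : MapsTo a (Icc 0 1) belowRegion) : Below a :=
  fun _ ht hx => (h ht).resolve_right (not_le.2 hx.2)

lemma above_of_mapsTo_swap (h : MapsTo (Prod.swap ∘ a) (Icc 0 1) belowRegion) : Above a :=
  fun _ ht hx => (h ht).resolve_left (not_le.2 hx.1)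

lemma DiPath.mapsTo_of_below (ha : DiPath Qobs a) (hB : Below a) :
    MapsTo a (Icc 0 1) belowRegion := by
  intro t ht
  by_contra! h
  simp only [belowRegion, mem_ofPred_eq, not_or, not_le] at h
  obtain ⟨hy, hx⟩ := h
  rcases le_or_gt (a t).1 (1/3) with hx' | hx'
  · obtain ⟨u, hu, hxu⟩ : ∃ u ∈ Icc t 1, (a u).1 = 1/2 :=
      intermediate_value_Icc ht.2 (ha.continuousOn.fst.mono (Icc_subset_Icc ht.1 le_rfl))
        ⟨by linarith, by rw [ha.apply_one]; norm_num⟩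
    have hu₀₁ : u ∈ Icc (0:ℝ) 1 := Icc_subset_Icc ht.1 le_rfl hu
    have := hB u hu₀₁ (by rw [hxu]; norm_num)
    linarith [ha.monotoneOn_snd ht hu₀₁ hu.1]
  · linarith [hB t ht ⟨hx', hx⟩]

lemma DiPath.mapsTo_swap_of_above (ha : DiPath Qobs a) (hA : Above a) :
    MapsTo (Prod.swap ∘ a) (Icc 0 1) belowRegion := by
  intro t ht
  by_contra! h
  simp only [belowRegion, mem_ofPred_eq, Function.comp_apply, Prod.fst_swap, Prod.snd_swap,
    not_or, not_le] at h
  obtain ⟨hx, hy⟩ := h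
  rcases le_or_gt (2/3) (a t).1 with hx' | hx'
  · obtain ⟨u, hu, hxu⟩ : ∃ u ∈ Icc 0 t, (a u).1 = 1/2 :=
      intermediate_value_Icc ht.1 (ha.continuousOn.fst.mono (Icc_subset_Icc le_rfl ht.2))
        ⟨by rw [ha.apply_zero]; norm_num, by linarith⟩
    have hu₀₁ : u ∈ Icc (0:ℝ) 1 := Icc_subset_Icc le_rfl ht.2 hu
    have := hA u hu₀₁ (by rw [hxu]; norm_num)
    linarith [ha.monotoneOn_snd hu₀₁ ht hu.2]
  · linarith [hA t ht ⟨hx, hx'⟩]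

end Regions

/-- `fade l p = l • p + (1 - l) • (0, 1)`. The corner `(0, 1)` is the least point of the unit
square for the southeast order `p ≤ q ↔ p.1 ≤ q.1 ∧ q.2 ≤ p.2`, whose join is `seSup`. -/
def fade (l : ℝ) (p : ℝ × ℝ) : ℝ × ℝ := (l * p.1, l * p.2 + (1 - l))

def seSup (p q : ℝ × ℝ) : ℝ × ℝ := (max p.1 q.1, min p.2 q.2)

lemma fade_one (p : ℝ × ℝ) : fade 1 p = p := by simp [fade]

lemma fade_mem_square {l : ℝ} (hl : l ∈ Icc (0:ℝ) 1) {p : ℝ × ℝ}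
    (hp : p ∈ Icc (0:ℝ) 1 ×ˢ Icc (0:ℝ) 1) : fade l p ∈ Icc (0:ℝ) 1 ×ˢ Icc (0:ℝ) 1 := by
  obtain ⟨⟨hx₀, hx₁⟩, hy₀, hy₁⟩ := hp
  obtain ⟨hl₀, hl₁⟩ := hl
  exact ⟨⟨mul_nonneg hl₀ hx₀, by simp only [fade]; nlinarith⟩, by simp only [fade]; nlinarith,
    by simp only [fade]; nlinarith⟩

lemma seSup_mem_square {p q : ℝ × ℝ} (hp : p ∈ Icc (0:ℝ) 1 ×ˢ Icc (0:ℝ) 1)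
    (hq : q ∈ Icc (0:ℝ) 1 ×ˢ Icc (0:ℝ) 1) : seSup p q ∈ Icc (0:ℝ) 1 ×ˢ Icc (0:ℝ) 1 :=
  ⟨⟨hp.1.1.trans (le_max_left _ _), max_le hp.1.2 hq.1.2⟩,
    ⟨le_min hp.2.1 hq.2.1, (min_le_left _ _).trans hp.2.2⟩⟩

noncomputable def seMix (a a' : ℝ → ℝ × ℝ) (t s : ℝ) : ℝ × ℝ :=
  seSup (fade (min 1 (2 - 2 * s)) (a t)) (fade (min 1 (2 * s)) (a' t))

lemma continuousOn_seMix {a a' : ℝ → ℝ × ℝ} (ha : ContinuousOn a (Icc 0 1))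
    (ha' : ContinuousOn a' (Icc 0 1)) :
    ContinuousOn (fun p : ℝ × ℝ => seMix a a' p.1 p.2) (Icc 0 1 ×ˢ Icc 0 1) := by
  simp only [seMix, seSup, fade]
  fun_prop (disch := exact fun _ hp => hp.1)

lemma seMix_weights_mem {s : ℝ} (hs : s ∈ Icc (0:ℝ) 1) :
    min 1 (2 - 2 * s) ∈ Icc (0:ℝ) 1 ∧ min 1 (2 * s) ∈ Icc (0:ℝ) 1 := by
  obtain ⟨hs₀, hs₁⟩ := hs
  exact ⟨⟨le_min zero_le_one (by linarith), min_le_left _ _⟩,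
    ⟨le_min zero_le_one (by linarith), min_le_left _ _⟩⟩

lemma seMix_weight_eq_one (s : ℝ) : min 1 (2 - 2 * s) = 1 ∨ min 1 (2 * s) = 1 := by
  rcases le_total s (1/2) with hs | hs
  · exact Or.inl (min_eq_left (by linarith))
  · exact Or.inr (min_eq_left (by linarith))

lemma left_or_right_le_seMix {a a' : ℝ → ℝ × ℝ} (t s : ℝ) :
    ((a t).1 ≤ (seMix a a' t s).1 ∧ (seMix a a' t s).2 ≤ (a t).2) ∨
      ((a' t).1 ≤ (seMix a a' t s).1 ∧ (seMix a a' t s).2 ≤ (a' t).2) := by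
  rcases seMix_weight_eq_one s with h | h
  · left
    simp only [seMix, seSup, h, fade_one]
    exact ⟨le_max_left _ _, min_le_left _ _⟩
  · right
    simp only [seMix, seSup, h, fade_one]
    exact ⟨le_max_right _ _, min_le_right _ _⟩

lemma diHomotopy_seMix {Q R : Set (ℝ × ℝ)} (hRQ : Disjoint R Q)
    (hR : ∀ p ∈ R, ∀ q : ℝ × ℝ, p.1 ≤ q.1 → q.2 ≤ p.2 → q ∈ R)
    {a a' : ℝ → ℝ × ℝ} (ha : DiPath Q a) (ha' : DiPath Q a')
    (hmaps : MapsTo a (Icc 0 1) R) (hmaps' : MapsTo a' (Icc 0 1) R) :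
    DiHomotopy Q a a' (seMix a a') := by
  obtain ⟨hc, hI, -, hm₁, hm₂, h₀, h₁⟩ := ha
  obtain ⟨hc', hI', -, hm₁', hm₂', h₀', h₁'⟩ := ha'
  refine ⟨continuousOn_seMix hc hc', fun t ht s hs => ?_, fun t ht => ?_, fun t ht => ?_,
    fun s hs => ?_, fun s hs => ?_, fun t ht s hs => ?_, fun s hs => ?_⟩
  · obtain ⟨hφ, hψ⟩ := seMix_weights_mem hs
    exact seSup_mem_square (fade_mem_square hφ (hI t ht)) (fade_mem_square hψ (hI' t ht))
  · obtain ⟨⟨hx₀, -⟩, -, hy₁⟩ := hI t ht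
    norm_num [seMix, seSup, fade, hx₀, hy₁]
  · obtain ⟨⟨hx₀, -⟩, -, hy₁⟩ := hI' t ht
    norm_num [seMix, seSup, fade, hx₀, hy₁]
  · obtain ⟨⟨-, hφ₁⟩, -, hψ₁⟩ := seMix_weights_mem hs
    rcases seMix_weight_eq_one s with h | h <;> simp [seMix, seSup, fade, h, h₀, h₀', hφ₁, hψ₁]
  · obtain ⟨⟨-, hφ₁⟩, -, hψ₁⟩ := seMix_weights_mem hs
    rcases seMix_weight_eq_one s with h | h <;> simp [seMix, seSup, fade, h, h₁, h₁', hφ₁, hψ₁]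
  · refine hRQ.notMem_of_mem_left ?_
    rcases left_or_right_le_seMix (a := a) (a' := a') t s with ⟨hx, hy⟩ | ⟨hx, hy⟩
    · exact hR _ (hmaps ht) _ hx hy
    · exact hR _ (hmaps' ht) _ hx hy
  · obtain ⟨⟨hφ₀, -⟩, hψ₀, -⟩ := seMix_weights_mem hs
    refine ⟨fun t₁ ht₁ t₂ ht₂ h => ?_, fun t₁ ht₁ t₂ ht₂ h => ?_⟩ <;> simp only [seMix, seSup, fade]
    · gcongr
      exacts [hm₁ ht₁ ht₂ h, hm₁' ht₁ ht₂ h]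
    · gcongr
      exacts [hm₂ ht₁ ht₂ h, hm₂' ht₁ ht₂ h]

namespace DiHomotopy

variable {Q : Set (ℝ × ℝ)} {a a' : ℝ → ℝ × ℝ} {H : ℝ → ℝ → ℝ × ℝ}

lemma swap (hH : DiHomotopy Q a a' H) :
    DiHomotopy (Prod.swap ⁻¹' Q) (Prod.swap ∘ a) (Prod.swap ∘ a') (fun t s => (H t s).swap) := by
  obtain ⟨hc, hI, h₀, h₁, he₀, he₁, hQ, hm⟩ := hH
  refine ⟨continuous_swap.comp_continuousOn hc, fun t ht s hs => (hI t ht s hs).symm,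
    fun t ht => by simp [h₀ t ht], fun t ht => by simp [h₁ t ht], fun s hs => by simp [he₀ s hs],
    fun s hs => by simp [he₁ s hs], hQ, fun s hs => (hm s hs).symm⟩

lemma diPath (hH : DiHomotopy Q a a' H) {s : ℝ} (hs : s ∈ Icc (0:ℝ) 1) :
    DiPath Q (fun t => H t s) := by
  obtain ⟨hc, hI, -, -, he₀, he₁, hQ, hm⟩ := hH
  exact ⟨hc.comp (continuous_id.prodMk continuous_const).continuousOn fun _ ht => ⟨ht, hs⟩,
    fun t ht => hI t ht s hs, fun t ht => hQ t ht s hs, (hm s hs).1, (hm s hs).2, he₀ s hs,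
    he₁ s hs⟩

lemma eventually_below_iff (hH : DiHomotopy Qobs a a' H) {s₀ : ℝ} (hs₀ : s₀ ∈ Icc (0:ℝ) 1) :
    ∀ᶠ s in 𝓝[Icc 0 1] s₀, Below (fun t => H t s₀) ↔ Below (fun t => H t s) := by
  obtain ⟨t₀, ht₀, hx₀⟩ := (hH.diPath hs₀).exists_fst_eq_half
  have hx₀' : (H t₀ s₀).1 ∈ Ioo (1/3 : ℝ) (2/3) := by rw [hx₀]; norm_num
  have hcont : ContinuousWithinAt (fun s => H t₀ s) (Icc 0 1) s₀ :=
    (hH.1 (t₀, s₀) ⟨ht₀, hs₀⟩).comp (continuous_const.prodMk continuous_id).continuousWithinAt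
      fun _ hs => ⟨ht₀, hs⟩
  have hx : ∀ᶠ s in 𝓝[Icc 0 1] s₀, (H t₀ s).1 ∈ Ioo (1/3 : ℝ) (2/3) :=
    hcont.fst.eventually_mem (Ioo_mem_nhds hx₀'.1 hx₀'.2)
  have hy : ∀ᶠ s in 𝓝[Icc 0 1] s₀, ((H t₀ s₀).2 < 1/2 ↔ (H t₀ s).2 < 1/2) := by
    rcases lt_or_gt_of_ne (fun h => (hH.diPath hs₀).snd_notMem_Ioo ht₀ hx₀' (by
      rw [show (H t₀ s₀).2 = 1/2 from h]; norm_num)) with h | h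
    · exact (hcont.snd.eventually (eventually_lt_nhds h)).mono fun _ h' => iff_of_true h h'
    · exact (hcont.snd.eventually (eventually_gt_nhds h)).mono fun _ h' =>
        iff_of_false h.not_gt h'.not_gt
  filter_upwards [hx, hy, self_mem_nhdsWithin] with s hxs hys hs
  rwa [(hH.diPath hs₀).below_iff_snd_lt_half ht₀ hx₀',
    (hH.diPath hs).below_iff_snd_lt_half ht₀ hxs]

lemma below_iff (hH : DiHomotopy Qobs a a' H) : Below a ↔ Below a' := by
  have h : Below (fun t => H t 0) ↔ Below (fun t => H t 1) :=
    isPreconnected_Icc.induction₂ (fun s s' => Below (fun t => H t s) ↔ Below (fun t => H t s'))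
      (fun _ hs => hH.eventually_below_iff hs) (fun _ _ _ _ _ _ => Iff.trans)
      (fun _ _ _ _ => Iff.symm) (left_mem_Icc.2 zero_le_one) (right_mem_Icc.2 zero_le_one)
  obtain ⟨-, -, h₀, h₁, -⟩ := hH
  rwa [below_congr h₀, below_congr h₁] at h

end DiHomotopy

namespace DiPath

variable {a a' : ℝ → ℝ × ℝ}

lemma exists_diHomotopy_of_below (ha : DiPath Qobs a) (ha' : DiPath Qobs a') (hB : Below a)
    (hB' : Below a') : ∃ H, DiHomotopy Qobs a a' H :=
  ⟨_, diHomotopy_seMix disjoint_belowRegion_Qobs (fun _ hp _ => mem_belowRegion_of_le hp) ha ha'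
    (ha.mapsTo_of_below hB) (ha'.mapsTo_of_below hB')⟩

lemma swap_Qobs (ha : DiPath Qobs a) : DiPath Qobs (Prod.swap ∘ a) := by
  simpa only [preimage_swap_Qobs] using ha.swap

lemma exists_diHomotopy_of_above (ha : DiPath Qobs a) (ha' : DiPath Qobs a') (hA : Above a)
    (hA' : Above a') : ∃ H, DiHomotopy Qobs a a' H := by
  have hH := (diHomotopy_seMix disjoint_belowRegion_Qobs (fun _ hp _ => mem_belowRegion_of_le hp)
    ha.swap_Qobs ha'.swap_Qobs (ha.mapsTo_swap_of_above hA) (ha'.mapsTo_swap_of_above hA')).swap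
  exact ⟨_, by simpa [preimage_swap_Qobs, Function.comp_def] using hH⟩

lemma sameSide_iff (ha : DiPath Qobs a) (ha' : DiPath Qobs a') :
    (Below a ∧ Below a') ∨ (Above a ∧ Above a') ↔ (Below a ↔ Below a') := by
  rw [ha.above_iff_not_below, ha'.above_iff_not_below]
  tauto

lemma exists_diHomotopy_iff (ha : DiPath Qobs a) (ha' : DiPath Qobs a') :
    (∃ H, DiHomotopy Qobs a a' H) ↔ (Below a ∧ Below a') ∨ (Above a ∧ Above a') := by
  refine ⟨fun ⟨_, hH⟩ => (sameSide_iff ha ha').2 hH.below_iff, ?_⟩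
  rintro (⟨hB, hB'⟩ | ⟨hA, hA'⟩)
  · exact exists_diHomotopy_of_below ha ha' hB hB'
  · exact exists_diHomotopy_of_above ha ha' hA hA'

end DiPath

noncomputable def pathBelow (t : ℝ) : ℝ × ℝ := (min 1 (2 * t), max 0 (2 * t - 1))

lemma mapsTo_pathBelow : MapsTo pathBelow (Icc 0 1) belowRegion := by
  intro t _
  rcases le_total t (1/2) with ht | ht
  · exact Or.inl (by simp [pathBelow, show 2 * t - 1 ≤ 0 by linarith])
  · exact Or.inr (by norm_num [pathBelow, show 1 ≤ 2 * t by linarith])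

lemma diPath_pathBelow : DiPath Qobs pathBelow := by
  refine ⟨by unfold pathBelow; fun_prop, fun t ⟨ht₀, ht₁⟩ => ?_,
    fun t ht => disjoint_belowRegion_Qobs.notMem_of_mem_left (mapsTo_pathBelow ht),
    fun t₁ _ t₂ _ h => ?_, fun t₁ _ t₂ _ h => ?_, by norm_num [pathBelow], by norm_num [pathBelow]⟩
  · exact ⟨⟨le_min zero_le_one (by linarith), min_le_left _ _⟩,
      ⟨le_max_left _ _, max_le zero_le_one (by linarith)⟩⟩
  · exact min_le_min le_rfl (by linarith)
  · exact max_le_max le_rfl (by linarith)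

/-- Two directed paths in the square annulus are joined by a directed homotopy if and
only if they pass on the same side of the obstruction; consequently there are exactly two
classes of directed paths up to directed homotopy. (The computation in 2.1 that the
fundamental category of the square annulus has exactly two arrows `0 → 1`.) -/
theorem diHomotopy_iff_same_side :
    (∀ a a' : ℝ → ℝ × ℝ, DiPath Qobs a → DiPath Qobs a' →
      ((∃ H, DiHomotopy Qobs a a' H) ↔
        ((Below a ∧ Below a') ∨ (Above a ∧ Above a')))) ∧
    (∃ a₀ a₁ : ℝ → ℝ × ℝ, DiPath Qobs a₀ ∧ DiPath Qobs a₁ ∧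
      ¬ (∃ H, DiHomotopy Qobs a₀ a₁ H) ∧
      ∀ a : ℝ → ℝ × ℝ, DiPath Qobs a →
        (∃ H, DiHomotopy Qobs a a₀ H) ∨ (∃ H, DiHomotopy Qobs a a₁ H)) := by
  have hB : Below pathBelow := below_of_mapsTo mapsTo_pathBelow
  have hA : Above (Prod.swap ∘ pathBelow) := above_of_mapsTo_swap mapsTo_pathBelow
  have hP := diPath_pathBelow.swap_Qobs
  refine ⟨fun a a' ha ha' => DiPath.exists_diHomotopy_iff ha ha', pathBelow, Prod.swap ∘ pathBelow,
    diPath_pathBelow, hP, ?_, fun a ha => ?_⟩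
  · rw [DiPath.exists_diHomotopy_iff diPath_pathBelow hP, DiPath.sameSide_iff diPath_pathBelow hP]
    exact fun h => hP.above_iff_not_below.1 hA (h.1 hB)
  · rw [DiPath.exists_diHomotopy_iff ha diPath_pathBelow, DiPath.exists_diHomotopy_iff ha hP]
    rcases ha.below_or_above with h | h
    exacts [Or.inl (Or.inl ⟨h, hB⟩), Or.inr (Or.inr ⟨h, hA⟩)]
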